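/- det₂ is the unique nonzero function from (n+1)-tuples of vectors in F₂ⁿ to F₂ that is multilinear, GL_n(F₂)-invariant, and vanishes whenever the rank of the n+1 vectors is less than n. -/

import Mathlib

/-! `GL_n(F₂)` acts transitively on the spanning tuples `k` with a given relation `λ`: both
`λ ↦ ∑ λᵢ kᵢ` are quotient maps `F₂ⁿ⁺¹ → F₂ⁿ` with kernel `F₂ ∙ λ`. So `D k` depends only on `λ`.
For `a ≠ b` in the support of `λ`, additivity in slot `a` applied to `k a = (k a + k b) + k b`
writes `D k` as the value at a tuple with relation `λ - e_b` plus the value at a tuple with a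
repeated vector; a tuple containing `0` has value `0`. The value on tuples with a repeated pair
does not depend on the positions of the pair, so `D k = (∑ λᵢ + 1) c`, and `D ≠ 0` forces
`c = 1`. -/

open Classical in
/-- The 2-determinant of `n+1` vectors in `F₂ⁿ`: equals `0` if the rank of the vectors
is less than `n`, and `∑ λᵢ + 1` for the unique nonzero relation `∑ λᵢ kᵢ = 0` otherwise. -/
noncomputable def det2 (n : ℕ) (k : Fin (n + 1) → Fin n → ZMod 2) : ZMod 2 :=
  if h : Module.finrank (ZMod 2) (Submodule.span (ZMod 2) (Set.range k)) = n ∧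
      ∃ lam : Fin (n + 1) → ZMod 2, lam ≠ 0 ∧ ∀ j, ∑ i, lam i * k i j = 0
  then (∑ i, h.2.choose i) + 1
  else 0

open Function Submodule Module

section LinearAlgebra

variable {K V ι : Type*} [Field K] [AddCommGroup V] [Module K V] [Fintype ι]

theorem exists_ne_zero_linearCombination_eq_zero [FiniteDimensional K V]
    (hcard : finrank K V < Fintype.card ι) (k : ι → V) :
    ∃ lam ≠ 0, Fintype.linearCombination K k lam = 0 := by
  have := LinearMap.ker_ne_bot_of_finrank_lt (f := Fintype.linearCombination K k)
    (by rwa [finrank_fintype_fun_eq_card])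
  obtain ⟨lam, hlam, hne⟩ := (Submodule.ne_bot_iff _).1 this
  exact ⟨lam, hne, hlam⟩

theorem ker_linearCombination_eq_span_singleton (hcard : Fintype.card ι = finrank K V + 1)
    {k : ι → V} (hk : span K (Set.range k) = ⊤)
    {lam : ι → K} (hlam : lam ≠ 0) (hrel : Fintype.linearCombination K k lam = 0) :
    LinearMap.ker (Fintype.linearCombination K k) = K ∙ lam := by
  refine (eq_of_le_of_finrank_le ((span_singleton_le_iff_mem _ _).2 hrel) ?_).symm
  have := LinearMap.finrank_range_add_finrank_ker (Fintype.linearCombination K k)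
  rw [Fintype.range_linearCombination, hk, finrank_top, finrank_fintype_fun_eq_card,
    hcard] at this
  rw [finrank_span_singleton hlam]
  omega

theorem exists_linearEquiv_apply_eq (hcard : Fintype.card ι = finrank K V + 1)
    {k k' : ι → V} (hk : span K (Set.range k) = ⊤)
    (hk' : span K (Set.range k') = ⊤) {lam : ι → K} (hlam : lam ≠ 0)
    (hrel : Fintype.linearCombination K k lam = 0)
    (hrel' : Fintype.linearCombination K k' lam = 0) :
    ∃ A : V ≃ₗ[K] V, ∀ i, A (k i) = k' i := by
  classical
  have hker : LinearMap.ker (Fintype.linearCombination K k) =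
      LinearMap.ker (Fintype.linearCombination K k') := by
    rw [ker_linearCombination_eq_span_singleton hcard hk hlam hrel,
      ker_linearCombination_eq_span_singleton hcard hk' hlam hrel']
  rw [span_range_eq_top_iff_surjective_fintypeLinearCombination] at hk hk'
  refine ⟨(LinearMap.quotKerEquivOfSurjective _ hk).symm ≪≫ₗ quotEquivOfEq _ _ hker ≪≫ₗ
    LinearMap.quotKerEquivOfSurjective _ hk', fun i => ?_⟩
  have hki : k i = Fintype.linearCombination K k (Pi.single i 1) := by simp
  have hk'i : k' i = Fintype.linearCombination K k' (Pi.single i 1) := by simp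
  rw [hki, hk'i, LinearEquiv.trans_apply, LinearEquiv.trans_apply,
    LinearMap.quotKerEquivOfSurjective_symm_apply, quotEquivOfEq_mk,
    LinearMap.quotKerEquivOfSurjective_apply_mk]

theorem exists_span_eq_top_linearCombination_eq_zero [FiniteDimensional K V]
    (hcard : Fintype.card ι = finrank K V + 1) {lam : ι → K} (hlam : lam ≠ 0) :
    ∃ k : ι → V, span K (Set.range k) = ⊤ ∧ Fintype.linearCombination K k lam = 0 := by
  classical
  have hdim : finrank K ((ι → K) ⧸ K ∙ lam) = finrank K V := by
    rw [finrank_quotient, finrank_span_singleton hlam, finrank_fintype_fun_eq_card, hcard,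
      Nat.add_sub_cancel]
  let π := (LinearEquiv.ofFinrankEq _ _ hdim).toLinearMap ∘ₗ (K ∙ lam).mkQ
  have hπ : Fintype.linearCombination K (fun i => π (Pi.single i 1)) = π :=
    LinearMap.pi_ext fun i x => by
      rw [Fintype.linearCombination_apply_single, ← map_smul, ← Pi.single_smul, smul_eq_mul,
        mul_one]
  refine ⟨fun i => π (Pi.single i 1), ?_, ?_⟩
  · rw [← Fintype.range_linearCombination, hπ, LinearMap.range_eq_top]
    exact (LinearEquiv.surjective _).comp (mkQ_surjective _)
  · rw [hπ]
    simp [π, mem_span_singleton_self]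

theorem span_range_update_eq_top [DecidableEq ι] {k : ι → V} (hk : span K (Set.range k) = ⊤)
    {lam : ι → K} (hrel : Fintype.linearCombination K k lam = 0) {a : ι} (ha : lam a ≠ 0)
    (x : V) : span K (Set.range (update k a x)) = ⊤ := by
  set S := span K (Set.range (update k a x))
  have hS : ∀ i ≠ a, k i ∈ S := fun i hi => subset_span ⟨i, update_of_ne hi _ _⟩
  have hka : lam a • k a ∈ S := by
    rw [Fintype.linearCombination_apply, Fintype.sum_eq_add_sum_compl a] at hrel
    rw [eq_neg_of_add_eq_zero_left hrel]
    exact neg_mem (sum_mem fun i hi => smul_mem _ _ (hS i (by simpa using hi)))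
  rw [eq_top_iff, ← hk, span_le]
  rintro _ ⟨i, rfl⟩
  by_cases hi : i = a
  · subst hi
    simpa [ha] using smul_mem S (lam i)⁻¹ hka
  · exact hS i hi

end LinearAlgebra

section Multiadditive

variable {ι V R : Type*} [DecidableEq ι]

def IsMultiadditive [Add V] [Add R] (D : (ι → V) → R) : Prop :=
  ∀ (k : ι → V) (i : ι) (u v : V), D (update k i (u + v)) = D (update k i u) + D (update k i v)

theorem IsMultiadditive.map_eq_zero [AddZeroClass V] [AddGroup R] {D : (ι → V) → R}
    (hD : IsMultiadditive D) {k : ι → V} {a : ι} (ha : k a = 0) : D k = 0 := by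
  have := hD k a 0 0
  rwa [add_zero, ← ha, update_eq_self, left_eq_add] at this

theorem IsMultiadditive.map_eq_add [AddCommGroup V] [Module (ZMod 2) V] [Add R]
    {D : (ι → V) → R} (hD : IsMultiadditive D) (k : ι → V) (a b : ι) :
    D k = D (update k a (k a + k b)) + D (update k a (k b)) := by
  rw [← hD, add_assoc, ZModModule.add_self, add_zero, update_eq_self]

end Multiadditive

section TwoElementField

theorem ZMod.eq_one_of_ne_zero {x : ZMod 2} (hx : x ≠ 0) : x = 1 := by
  revert x
  decide

variable {ι V : Type*}

theorem single_add_single_ne_zero [DecidableEq ι] {a b : ι} (hab : a ≠ b) :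
    (Pi.single a 1 + Pi.single b 1 : ι → ZMod 2) ≠ 0 :=
  fun h => by simpa [hab] using congrFun h a

theorem sum_eq_sum_update_zero_add_one [Fintype ι] [DecidableEq ι] {lam : ι → ZMod 2} {b : ι}
    (hb : lam b = 1) : ∑ i, lam i = ∑ i, update lam b 0 i + 1 := by
  rw [Finset.sum_update_of_mem (Finset.mem_univ b),
    Finset.sum_eq_add_sum_sdiff_singleton_of_mem (Finset.mem_univ b), hb, zero_add, add_comm]

variable [Fintype ι] [AddCommGroup V] [Module (ZMod 2) V]

theorem linearCombination_single_add_single [DecidableEq ι] (k : ι → V) (a b : ι) :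
    Fintype.linearCombination (ZMod 2) k (Pi.single a 1 + Pi.single b 1) = k a + k b := by
  simp

theorem linearCombination_update_add_update_zero [DecidableEq ι] {k : ι → V} {lam : ι → ZMod 2}
    {a b : ι} (hab : a ≠ b) (ha : lam a = 1) (hb : lam b = 1) :
    Fintype.linearCombination (ZMod 2) (update k a (k a + k b)) (update lam b 0) =
      Fintype.linearCombination (ZMod 2) k lam := by
  simp only [Fintype.linearCombination_apply]
  rw [← sub_eq_zero, ← Finset.sum_sub_distrib, Fintype.sum_eq_add a b hab]
  · simp [hab, hab.symm, ha, hb]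
  · rintro i ⟨hia, hib⟩
    simp [hia, hib]

theorem eq_of_linearCombination_eq_zero (hcard : Fintype.card ι = finrank (ZMod 2) V + 1)
    {k : ι → V} (hk : span (ZMod 2) (Set.range k) = ⊤) {lam mu : ι → ZMod 2} (hlam : lam ≠ 0)
    (hmu : mu ≠ 0) (hrel : Fintype.linearCombination (ZMod 2) k lam = 0)
    (hrel' : Fintype.linearCombination (ZMod 2) k mu = 0) : mu = lam := by
  have hmem : mu ∈ LinearMap.ker (Fintype.linearCombination (ZMod 2) k) := hrel'
  rw [ker_linearCombination_eq_span_singleton hcard hk hlam hrel, mem_span_singleton] at hmem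
  obtain ⟨c, rfl⟩ := hmem
  rw [ZMod.eq_one_of_ne_zero (left_ne_zero_of_smul hmu), one_smul]

variable {D : (ι → V) → ZMod 2}

theorem map_eq_of_linearCombination_eq_zero (hcard : Fintype.card ι = finrank (ZMod 2) V + 1)
    (hinv : ∀ (A : V ≃ₗ[ZMod 2] V) (k : ι → V), D (fun i => A (k i)) = D k)
    {k k' : ι → V} (hk : span (ZMod 2) (Set.range k) = ⊤)
    (hk' : span (ZMod 2) (Set.range k') = ⊤) {lam : ι → ZMod 2} (hlam : lam ≠ 0)
    (hrel : Fintype.linearCombination (ZMod 2) k lam = 0)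
    (hrel' : Fintype.linearCombination (ZMod 2) k' lam = 0) : D k = D k' := by
  obtain ⟨A, hA⟩ := exists_linearEquiv_apply_eq hcard hk hk' hlam hrel hrel'
  rw [← hinv A k]
  exact congrArg D (funext hA)

theorem map_eq_of_apply_eq_apply (hcard : Fintype.card ι = finrank (ZMod 2) V + 1)
    (hinv : ∀ (A : V ≃ₗ[ZMod 2] V) (k : ι → V), D (fun i => A (k i)) = D k)
    {a b : ι} (hab : a ≠ b) {k k' : ι → V} (hk : span (ZMod 2) (Set.range k) = ⊤)
    (hk' : span (ZMod 2) (Set.range k') = ⊤) (h : k a = k b) (h' : k' a = k' b) : D k = D k' := by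
  classical
  exact map_eq_of_linearCombination_eq_zero hcard hinv hk hk' (single_add_single_ne_zero hab)
    (by rw [linearCombination_single_add_single, h, ZModModule.add_self])
    (by rw [linearCombination_single_add_single, h', ZModModule.add_self])

variable [FiniteDimensional (ZMod 2) V]

theorem exists_span_eq_top_apply_eq_apply (hcard : Fintype.card ι = finrank (ZMod 2) V + 1)
    {a b : ι} (hab : a ≠ b) : ∃ k : ι → V, span (ZMod 2) (Set.range k) = ⊤ ∧ k a = k b := by
  classical
  obtain ⟨k, hk, hrel⟩ :=
    exists_span_eq_top_linearCombination_eq_zero (V := V) hcard (single_add_single_ne_zero hab)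
  rw [linearCombination_single_add_single, ← ZModModule.sub_eq_add, sub_eq_zero] at hrel
  exact ⟨k, hk, hrel⟩

/-- Splitting a tuple with `t a + t b + t c = 0` at `a` and at `b` gives two decompositions of
`D t` sharing the summand with a repeated pair at `a, b`; the remaining summands have repeated
pairs at `a, c` and at `b, c`. -/
theorem map_eq_of_apply_eq_apply_of_apply_eq_apply [DecidableEq ι]
    (hcard : Fintype.card ι = finrank (ZMod 2) V + 1) (hD : IsMultiadditive D)
    (hinv : ∀ (A : V ≃ₗ[ZMod 2] V) (k : ι → V), D (fun i => A (k i)) = D k) {a b c : ι}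
    (hac : a ≠ c) (hbc : b ≠ c) {k k' : ι → V}
    (hk : span (ZMod 2) (Set.range k) = ⊤) (hk' : span (ZMod 2) (Set.range k') = ⊤)
    (h : k a = k c) (h' : k' b = k' c) : D k = D k' := by
  rcases eq_or_ne a b with rfl | hab
  · exact map_eq_of_apply_eq_apply hcard hinv hac hk hk' h h'
  set lam : ι → ZMod 2 := Pi.single a 1 + Pi.single b 1 + Pi.single c 1
  have hlam_a : lam a ≠ 0 := by simp [lam, hab, hac]
  have hlam_b : lam b ≠ 0 := by simp [lam, hab.symm, hbc]
  obtain ⟨t, ht, hrel⟩ := exists_span_eq_top_linearCombination_eq_zero (V := V) hcard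
    (Function.ne_iff.2 ⟨a, hlam_a⟩)
  have habc : t a + t b = t c := by
    rw [← ZModModule.neg_eq_self (t c)]
    exact eq_neg_of_add_eq_zero_left (by simpa [lam] using hrel)
  have hspan_a := span_range_update_eq_top ht hrel hlam_a
  have hspan_b := span_range_update_eq_top ht hrel hlam_b
  have h_ac : D k = D (update t a (t a + t b)) :=
    map_eq_of_apply_eq_apply hcard hinv hac hk (hspan_a _) h (by simp [hac.symm, habc])
  have h_bc : D k' = D (update t b (t b + t a)) :=
    map_eq_of_apply_eq_apply hcard hinv hbc hk' (hspan_b _) h'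
      (by simp [hbc.symm, add_comm, habc])
  have h_ab : D (update t a (t b)) = D (update t b (t a)) :=
    map_eq_of_apply_eq_apply hcard hinv hab (hspan_a _) (hspan_b _) (by simp [hab.symm])
      (by simp [hab])
  have := (hD.map_eq_add t a b).symm.trans (hD.map_eq_add t b a)
  rw [← h_ac, ← h_bc, h_ab] at this
  exact add_right_cancel this

theorem exists_map_eq_of_apply_eq_apply [DecidableEq ι]
    (hcard : Fintype.card ι = finrank (ZMod 2) V + 1) (hD : IsMultiadditive D)
    (hinv : ∀ (A : V ≃ₗ[ZMod 2] V) (k : ι → V), D (fun i => A (k i)) = D k) :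
    ∃ c, ∀ k : ι → V, span (ZMod 2) (Set.range k) = ⊤ → ∀ a b, a ≠ b → k a = k b → D k = c := by
  by_cases hι : ∃ a b : ι, a ≠ b
  swap
  · push Not at hι
    exact ⟨0, fun k _ a b hab _ => absurd (hι a b) hab⟩
  obtain ⟨a₀, b₀, h₀⟩ := hι
  obtain ⟨k₀, hk₀, hk₀ab⟩ := exists_span_eq_top_apply_eq_apply (V := V) hcard h₀
  refine ⟨D k₀, fun k hk a b hab h => ?_⟩
  rcases eq_or_ne b₀ a with rfl | hb₀a
  · exact map_eq_of_apply_eq_apply_of_apply_eq_apply hcard hD hinv hab.symm h₀ hk hk₀ h.symm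
      hk₀ab
  · obtain ⟨m, hm, hmab⟩ := exists_span_eq_top_apply_eq_apply (V := V) hcard hb₀a.symm
    exact (map_eq_of_apply_eq_apply_of_apply_eq_apply hcard hD hinv hab.symm hb₀a hk hm h.symm
      hmab.symm).trans
      (map_eq_of_apply_eq_apply_of_apply_eq_apply hcard hD hinv hb₀a.symm h₀ hm hk₀ hmab hk₀ab)

theorem exists_map_eq_sum_add_one_mul [DecidableEq ι]
    (hcard : Fintype.card ι = finrank (ZMod 2) V + 1) (hD : IsMultiadditive D)
    (hinv : ∀ (A : V ≃ₗ[ZMod 2] V) (k : ι → V), D (fun i => A (k i)) = D k) :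
    ∃ c, ∀ (k : ι → V) (lam : ι → ZMod 2), span (ZMod 2) (Set.range k) = ⊤ → lam ≠ 0 →
      Fintype.linearCombination (ZMod 2) k lam = 0 → D k = (∑ i, lam i + 1) * c := by
  obtain ⟨c, hc⟩ := exists_map_eq_of_apply_eq_apply hcard hD hinv
  refine ⟨c, fun k lam hk hlam hrel => ?_⟩
  induction hs : (Finset.univ.filter (lam · ≠ 0)).card using Nat.strong_induction_on
    generalizing k lam with
  | _ m ih =>
  obtain ⟨a, ha : lam a ≠ 0⟩ := Function.ne_iff.1 hlam
  by_cases hsupp : ∃ b ≠ a, lam b ≠ 0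
  · obtain ⟨b, hba, hb⟩ := hsupp
    have hlt : (Finset.univ.filter (update lam b 0 · ≠ 0)).card < m := by
      rw [← hs, show Finset.univ.filter (update lam b 0 · ≠ 0) =
        (Finset.univ.filter (lam · ≠ 0)).erase b by ext i; by_cases i = b <;> simp_all]
      exact Finset.card_erase_lt_of_mem (by simpa using hb)
    have hrel' := linearCombination_update_add_update_zero (k := k) hba.symm
      (ZMod.eq_one_of_ne_zero ha) (ZMod.eq_one_of_ne_zero hb)
    rw [hD.map_eq_add k a b,
      ih _ hlt _ _ (span_range_update_eq_top hk hrel ha _)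
        (Function.ne_iff.2 ⟨a, by simpa [hba.symm] using ha⟩) (hrel'.trans hrel) rfl,
      hc (update k a (k b)) (span_range_update_eq_top hk hrel ha _) a b hba.symm
        (by simp [hba]),
      sum_eq_sum_update_zero_add_one (ZMod.eq_one_of_ne_zero hb)]
    ring
  · push Not at hsupp
    have hka : k a = 0 := by
      rwa [Fintype.linearCombination_apply, Fintype.sum_eq_single a fun i hi => by
        rw [hsupp i hi, zero_smul], ZMod.eq_one_of_ne_zero ha, one_smul] at hrel
    rw [hD.map_eq_zero hka, Fintype.sum_eq_single a hsupp, ZMod.eq_one_of_ne_zero ha,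
      show (1 + 1 : ZMod 2) = 0 from rfl, zero_mul]

end TwoElementField

section Det2

theorem linearCombination_eq_zero_iff {ι κ R : Type*} [Fintype ι] [CommSemiring R]
    (k : ι → κ → R) (lam : ι → R) :
    Fintype.linearCombination R k lam = 0 ↔ ∀ j, ∑ i, lam i * k i j = 0 := by
  simp [funext_iff, Fintype.linearCombination_apply, Finset.sum_apply]

variable {n : ℕ}

theorem card_fin_succ_eq_finrank_add_one :
    Fintype.card (Fin (n + 1)) = finrank (ZMod 2) (Fin n → ZMod 2) + 1 := by
  rw [Fintype.card_fin, finrank_fin_fun]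

theorem det2_eq_sum_add_one {k : Fin (n + 1) → Fin n → ZMod 2}
    (hk : span (ZMod 2) (Set.range k) = ⊤) {lam : Fin (n + 1) → ZMod 2} (hlam : lam ≠ 0)
    (hrel : Fintype.linearCombination (ZMod 2) k lam = 0) : det2 n k = ∑ i, lam i + 1 := by
  have h : finrank (ZMod 2) (span (ZMod 2) (Set.range k)) = n ∧
      ∃ lam : Fin (n + 1) → ZMod 2, lam ≠ 0 ∧ ∀ j, ∑ i, lam i * k i j = 0 :=
    ⟨by rw [hk, finrank_top, finrank_fin_fun], lam, hlam,
      (linearCombination_eq_zero_iff k lam).1 hrel⟩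
  rw [det2, dif_pos h, eq_of_linearCombination_eq_zero card_fin_succ_eq_finrank_add_one hk hlam
    h.2.choose_spec.1 hrel ((linearCombination_eq_zero_iff k _).2 h.2.choose_spec.2)]

theorem det2_eq_zero {k : Fin (n + 1) → Fin n → ZMod 2}
    (hk : span (ZMod 2) (Set.range k) ≠ ⊤) : det2 n k = 0 :=
  dif_neg fun h => hk (eq_top_of_finrank_eq (by simp [h.1]))

end Det2

theorem det2_unique_general (n : ℕ) (D : (Fin (n + 1) → Fin n → ZMod 2) → ZMod 2)
    (hvanish : ∀ k : Fin (n + 1) → Fin n → ZMod 2,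
      Module.finrank (ZMod 2) (Submodule.span (ZMod 2) (Set.range k)) < n → D k = 0)
    (hadd : ∀ (k : Fin (n + 1) → Fin n → ZMod 2) (i : Fin (n + 1)) (u v : Fin n → ZMod 2),
      D (Function.update k i (u + v)) = D (Function.update k i u) + D (Function.update k i v))
    (hinv : ∀ (A : Matrix (Fin n) (Fin n) (ZMod 2)), IsUnit A.det →
      ∀ k : Fin (n + 1) → Fin n → ZMod 2, D (fun i => A.mulVec (k i)) = D k)
    (hne : D ≠ 0) :
    D = det2 n := by
  have hinv' (A : (Fin n → ZMod 2) ≃ₗ[ZMod 2] (Fin n → ZMod 2))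
      (k : Fin (n + 1) → Fin n → ZMod 2) : D (fun i => A (k i)) = D k := by
    simpa using hinv (LinearMap.toMatrix' A)
      (by rw [LinearMap.det_toMatrix']; exact A.isUnit_det') k
  obtain ⟨c, hc⟩ := exists_map_eq_sum_add_one_mul card_fin_succ_eq_finrank_add_one hadd hinv'
  have hD_eq (k : Fin (n + 1) → Fin n → ZMod 2) : D k = det2 n k * c := by
    by_cases hk : span (ZMod 2) (Set.range k) = ⊤
    · obtain ⟨lam, hlam, hrel⟩ :=
        exists_ne_zero_linearCombination_eq_zero (K := ZMod 2) (by simp) k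
      rw [hc k lam hk hlam hrel, det2_eq_sum_add_one hk hlam hrel]
    · rw [hvanish k ((finrank_lt hk).trans_eq (by simp)), det2_eq_zero hk, zero_mul]
  have hc1 : c = 1 := ZMod.eq_one_of_ne_zero fun h => hne (funext fun k => by simp [hD_eq, h])
  funext k
  rw [hD_eq, hc1, mul_one]

/-- `det₂` is the unique nonzero multilinear `GL_n(F₂)`-invariant function of
`n+1` vectors in `F₂ⁿ` that vanishes on tuples of rank `< n`. -/
theorem det2_unique (n : ℕ) (D : (Fin (n + 1) → Fin n → ZMod 2) → ZMod 2)
    (hvanish : ∀ k : Fin (n + 1) → Fin n → ZMod 2,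
      Module.finrank (ZMod 2) (Submodule.span (ZMod 2) (Set.range k)) < n → D k = 0)
    (hadd : ∀ (k : Fin (n + 1) → Fin n → ZMod 2) (i : Fin (n + 1)) (u v : Fin n → ZMod 2),
      D (Function.update k i (u + v)) = D (Function.update k i u) + D (Function.update k i v))
    (hsmul : ∀ (k : Fin (n + 1) → Fin n → ZMod 2) (i : Fin (n + 1)) (c : ZMod 2)
      (u : Fin n → ZMod 2),
      D (Function.update k i (c • u)) = c * D (Function.update k i u))
    (hinv : ∀ (A : Matrix (Fin n) (Fin n) (ZMod 2)), IsUnit A.det →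
      ∀ k : Fin (n + 1) → Fin n → ZMod 2, D (fun i => A.mulVec (k i)) = D k)
    (hne : D ≠ 0) :
    D = det2 n :=
  det2_unique_general n D hvanish hadd hinv hne
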